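/- Let L be a complex Hilbert space and let C, S ∈ B(L) be commuting, positive, injective selfadjoint operators with C² + S² = 1. On H = L ⊕ L let A₀ be the block operator [[S², -CS], [-CS, -S²]]. Then a block operator T = [[X, Y₁], [Y₂, W]] ∈ B(H) commutes with A₀ if and only if X, Y₁, Y₂, W each commute with S (hence also with C), Y₁ = Y₂, and C(X - W) + 2SY₁ = 0. -/
import Mathlib


open ContinuousLinearMap

variable {L : Type*} [NormedAddCommGroup L] [InnerProductSpace ℂ L] [CompleteSpace L]

/-- The block operator `[[X, Y], [Z, W]]` on the Hilbert-space direct sum `L ⊕ L`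
(realized as `WithLp 2 (L × L)`), acting by `(ξ, η) ↦ (Xξ + Yη, Zξ + Wη)`. -/
noncomputable def blockOp (X Y Z W : L →L[ℂ] L) :
    WithLp 2 (L × L) →L[ℂ] WithLp 2 (L × L) :=
  (WithLp.prodContinuousLinearEquiv 2 ℂ L L).symm.toContinuousLinearMap ∘L
    (((X.coprod Y).prod (Z.coprod W)) ∘L
      (WithLp.prodContinuousLinearEquiv 2 ℂ L L).toContinuousLinearMap)

lemma blockOp_mul (X Y Z W X' Y' Z' W' : L →L[ℂ] L) :
    blockOp X Y Z W * blockOp X' Y' Z' W' =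
      blockOp (X*X' + Y*Z') (X*Y' + Y*W') (Z*X' + W*Z') (Z*Y' + W*W') := by
  ext v
  all_goals simp [blockOp, mul_apply]

lemma blockOp_inj {X Y Z W X' Y' Z' W' : L →L[ℂ] L}
    (h : blockOp X Y Z W = blockOp X' Y' Z' W') : X = X' ∧ Y = Y' ∧ Z = Z' ∧ W = W' := by
  have h1 : ∀ p : L × L, (X p.1 + Y p.2, Z p.1 + W p.2) = (X' p.1 + Y' p.2, Z' p.1 + W' p.2) := by
    intro p
    have := congrArg (fun T : WithLp 2 (L × L) →L[ℂ] WithLp 2 (L × L) =>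
      (WithLp.prodContinuousLinearEquiv 2 ℂ L L) (T ((WithLp.prodContinuousLinearEquiv 2 ℂ L L).symm p))) h
    simpa [blockOp] using this
  refine ⟨?_, ?_, ?_, ?_⟩ <;> ext u
  · simpa using congrArg Prod.fst (h1 (u, 0))
  · simpa using congrArg Prod.fst (h1 (0, u))
  · simpa using congrArg Prod.snd (h1 (u, 0))
  · simpa using congrArg Prod.snd (h1 (0, u))

noncomputable def commutantSubalg {A : Type*} [CStarAlgebra A] {a : A} (ha : IsSelfAdjoint a)
    (b : A) : Subalgebra ℝ C(spectrum ℝ a, ℝ) where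
  carrier := {g | Commute b (cfcHom ha g)}
  mul_mem' {g g'} hg hg' := by
    show Commute b (cfcHom ha (g * g'))
    rw [map_mul]; exact Commute.mul_right hg hg'
  add_mem' {g g'} hg hg' := by
    show Commute b (cfcHom ha (g + g'))
    rw [map_add]; exact Commute.add_right hg hg'
  algebraMap_mem' r := by
    show Commute b (cfcHom ha (algebraMap ℝ C(spectrum ℝ a, ℝ) r))
    rw [AlgHomClass.commutes]
    exact Algebra.commute_algebraMap_right r b

open Polynomial in
lemma commute_cfc_real {A : Type*} [CStarAlgebra A] {a b : A} (ha : IsSelfAdjoint a)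
    (hab : Commute b a) (f : ℝ → ℝ) : Commute b (cfc f a) := by
  by_cases hf : ContinuousOn f (spectrum ℝ a)
  · rw [cfc_apply f a ha hf]
    have hclosed : IsClosed ((commutantSubalg ha b : Subalgebra ℝ C(spectrum ℝ a, ℝ)) :
        Set C(spectrum ℝ a, ℝ)) := by
      have h0 : ((commutantSubalg ha b : Subalgebra ℝ C(spectrum ℝ a, ℝ)) :
          Set C(spectrum ℝ a, ℝ)) = {g | b * cfcHom ha g = cfcHom ha g * b} := rfl
      rw [h0]
      exact isClosed_eq (continuous_const.mul (cfcHom_isClosedEmbedding ha).continuous)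
        ((cfcHom_isClosedEmbedding ha).continuous.mul continuous_const)
    have hpoly : polynomialFunctions (spectrum ℝ a) ≤ commutantSubalg ha b := by
      rintro g hg
      obtain ⟨p, -, rfl⟩ := hg
      show Commute b (cfcHom ha (Polynomial.toContinuousMapOnAlgHom _ p))
      have heq : cfcHom ha (Polynomial.toContinuousMapOnAlgHom (spectrum ℝ a) p) = aeval a p := by
        rw [← cfc_polynomial p a ha, cfc_apply (p.eval ·) a ha]
        rfl
      have hcomm : Commute b (aeval a p) := by
        clear heq
        induction p using Polynomial.induction_on with
        | C r => rw [aeval_C]; exact Algebra.commute_algebraMap_right r b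
        | add p q hp hq => rw [map_add]; exact hp.add_right hq
        | monomial n r _ =>
          rw [map_mul, aeval_C, map_pow, aeval_X]
          exact (Algebra.commute_algebraMap_right r b).mul_right (hab.pow_right (n + 1))
      rw [heq]; exact hcomm
    have hcl := polynomialFunctions.topologicalClosure (spectrum ℝ a)
    have hle : (⊤ : Subalgebra ℝ C(spectrum ℝ a, ℝ)) ≤ commutantSubalg ha b :=
      hcl ▸ (polynomialFunctions (spectrum ℝ a)).topologicalClosure_minimal hpoly hclosed
    exact hle Algebra.mem_top
  · rw [cfc_apply_of_not_continuousOn a hf]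
    exact Commute.zero_right b

lemma commute_of_commute_sq {A : Type*} [CStarAlgebra A] [PartialOrder A] [StarOrderedRing A]
    [NonnegSpectrumClass ℝ A] {s b : A} (hs : 0 ≤ s)
    (h : Commute b (s * s)) : Commute b s := by
  have hsa : IsSelfAdjoint s := hs.isSelfAdjoint
  have hkey : cfc Real.sqrt (s * s) = s := by
    have h1 : s * s = s ^ 2 := (sq s).symm
    rw [h1, ← cfc_comp_pow Real.sqrt 2 s (by fun_prop) hsa]
    calc cfc (fun x : ℝ => Real.sqrt (x ^ 2)) s = cfc (id : ℝ → ℝ) s := by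
          apply cfc_congr
          intro x hx
          have hx0 : (0 : ℝ) ≤ x := spectrum_nonneg_of_nonneg hs hx
          simp [Real.sqrt_sq hx0]
      _ = s := cfc_id ℝ s
  have := commute_cfc_real (hsa.mul_self_nonneg).isSelfAdjoint h Real.sqrt
  rwa [hkey] at this

/-- description of the commutant of `A₀ = [[S², -CS], [-CS, -S²]]`:
a block operator `[[X, Y₁], [Y₂, W]]` commutes with `A₀` iff its entries commute with `S`,
`Y₁ = Y₂` and `C(X - W) + 2SY₁ = 0`. -/
theorem commutant_of_A0 (C S X Y₁ Y₂ W : L →L[ℂ] L)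
    (hC : C.IsPositive) (hS : S.IsPositive)
    (hCinj : Function.Injective ⇑C) (hSinj : Function.Injective ⇑S)
    (hCS : Commute C S) (hone : C * C + S * S = 1) :
    Commute (blockOp X Y₁ Y₂ W)
        (blockOp (S * S) (-(C * S)) (-(C * S)) (-(S * S))) ↔
      (Commute X S ∧ Commute Y₁ S ∧ Commute Y₂ S ∧ Commute W S ∧
        Y₁ = Y₂ ∧ C * (X - W) + 2 • (S * Y₁) = 0) := by
  have hS0 : (0 : L →L[ℂ] L) ≤ S := (ContinuousLinearMap.nonneg_iff_isPositive S).mpr hS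
  have hC0 : (0 : L →L[ℂ] L) ≤ C := (ContinuousLinearMap.nonneg_iff_isPositive C).mpr hC
  -- commuting with S implies commuting with C
  have hcc : ∀ B : L →L[ℂ] L, Commute B S → Commute B C := by
    intro B hBS
    apply commute_of_commute_sq hC0
    have hCC : C * C = 1 - S * S := eq_sub_of_add_eq hone
    rw [hCC]
    exact (Commute.one_right B).sub_right (hBS.mul_right hBS)
  -- atoms
  set u : L →L[ℂ] L := C * S with hu
  set v : L →L[ℂ] L := S * S with hv
  have hCSu : Commute S u := (hCS.symm).mul_right (Commute.refl S)
  constructor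
  · intro h
    -- commute with A₀² = diag(v, v)
    have hA2 : blockOp v (-u) (-u) (-v) * blockOp v (-u) (-u) (-v) =
        blockOp v 0 0 v := by
      rw [blockOp_mul]
      have hcs2 : u * u = (C * C) * v := by
        rw [hu, hv, mul_assoc, ← mul_assoc S C S, ← hCS.eq, mul_assoc, ← mul_assoc,
          ← mul_assoc, mul_assoc (C*C)]
      have hvu : v * u = u * v := ((hCSu.mul_left hCSu)).eq
      congr 1
      · rw [neg_mul_neg, hcs2, ← add_mul, add_comm v (C*C), hone, one_mul]
      · rw [mul_neg, neg_mul_neg, ← hvu, neg_add_cancel]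
      · rw [neg_mul, neg_mul_neg, hvu, neg_add_cancel]
      · rw [neg_mul_neg, neg_mul_neg, hcs2, ← add_mul, hone, one_mul]
    have hsq : Commute (blockOp X Y₁ Y₂ W) (blockOp v 0 0 v) := by
      have := h.mul_right h
      rwa [hA2] at this
    have hsq' := hsq.eq
    rw [blockOp_mul, blockOp_mul] at hsq'
    obtain ⟨e1, e2, e3, e4⟩ := blockOp_inj hsq'
    simp only [mul_zero, zero_mul, add_zero, zero_add] at e1 e2 e3 e4
    have hXS : Commute X S := commute_of_commute_sq hS0 e1
    have hY1S : Commute Y₁ S := commute_of_commute_sq hS0 e2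
    have hY2S : Commute Y₂ S := commute_of_commute_sq hS0 e3
    have hWS : Commute W S := commute_of_commute_sq hS0 e4
    have hXu : Commute X u := (hcc X hXS).mul_right hXS
    have hY1u : Commute Y₁ u := (hcc Y₁ hY1S).mul_right hY1S
    have hY2u : Commute Y₂ u := (hcc Y₂ hY2S).mul_right hY2S
    have hWu : Commute W u := (hcc W hWS).mul_right hWS
    have hXv : Commute X v := hXS.mul_right hXS
    have hY1v : Commute Y₁ v := hY1S.mul_right hY1S
    -- entry equations from commutation with A₀
    have h' := h.eq
    rw [blockOp_mul, blockOp_mul] at h'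
    obtain ⟨E1, E2, E3, E4⟩ := blockOp_inj h'
    -- Y₁ = Y₂ from E1
    simp only [mul_neg, neg_mul, hXv.eq, hY1u.eq] at E1
    have huY : u * Y₁ = u * Y₂ := by
      exact neg_inj.mp (add_left_cancel E1)
    have hY12 : Y₁ = Y₂ := by
      ext x
      apply hSinj
      apply hCinj
      have := DFunLike.congr_fun huY x
      simpa [hu, mul_apply] using this
    -- key identity from E2
    simp only [mul_neg, neg_mul, hXu.eq, hY1v.eq] at E2
    -- E2 : -(u*X) + -(v*Y₁) = v*Y₁ + -(u*W)
    have h0 : u * X + (v * Y₁ + v * Y₁) - u * W = 0 := by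
      have hcalc : u * X + (v * Y₁ + v * Y₁) - u * W =
          -((-(u * X) + -(v * Y₁)) - (v * Y₁ + -(u * W))) := by abel
      rw [hcalc, E2, sub_self, neg_zero]
    have hkey : C * (X - W) + 2 • (S * Y₁) = 0 := by
      have hmul : S * (C * (X - W) + 2 • (S * Y₁)) =
          u * X + (v * Y₁ + v * Y₁) - u * W := by
        rw [mul_add, ← mul_assoc, ← hCS.eq, mul_sub, mul_smul_comm, ← mul_assoc, two_smul]
        rw [← hu, ← hv]
        abel
      rw [h0] at hmul
      ext x
      apply hSinj
      have := DFunLike.congr_fun hmul x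
      simpa [mul_apply, map_zero] using this
    exact ⟨hXS, hY1S, hY2S, hWS, hY12, hkey⟩
  · rintro ⟨hXS, hY1S, hY2S, hWS, hY12, hkey⟩
    subst hY12
    have hXu : Commute X u := (hcc X hXS).mul_right hXS
    have hY1u : Commute Y₁ u := (hcc Y₁ hY1S).mul_right hY1S
    have hWu : Commute W u := (hcc W hWS).mul_right hWS
    have hXv : Commute X v := hXS.mul_right hXS
    have hY1v : Commute Y₁ v := hY1S.mul_right hY1S
    have hWv : Commute W v := hWS.mul_right hWS
    -- key identity multiplied by S
    have h0 : u * X + (v * Y₁ + v * Y₁) - u * W = 0 := by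
      have hmul : S * (C * (X - W) + 2 • (S * Y₁)) =
          u * X + (v * Y₁ + v * Y₁) - u * W := by
        rw [mul_add, ← mul_assoc, ← hCS.eq, mul_sub, mul_smul_comm, ← mul_assoc, two_smul]
        rw [← hu, ← hv]
        abel
      rw [hkey, mul_zero] at hmul
      exact hmul.symm
    have hsub : u * X = u * W - (v * Y₁ + v * Y₁) := by
      have h2 : u * X + (v * Y₁ + v * Y₁) = u * W := by
        rwa [sub_eq_zero] at h0
      exact eq_sub_of_add_eq h2
    show _ = _
    rw [blockOp_mul, blockOp_mul]
    congr 1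
    · simp only [mul_neg, neg_mul, hXv.eq, hY1u.eq]
    · simp only [mul_neg, neg_mul, hXu.eq, hY1v.eq]
      rw [hsub]; abel
    · simp only [mul_neg, neg_mul, hY1v.eq, hWu.eq, hY1u.eq]
      rw [hsub]; abel
    · simp only [mul_neg, neg_mul, hY1u.eq, hWv.eq]
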